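/- Let $(g_n)_{n\in\mathbb{N}}$ be a sequence of measurable functions $g_n : [0,\infty) \to \mathbb{R}$, uniformly bounded by a constant $C \ge 0$, with $g_n(0)=0$ for all $n$, and suppose $\lim_{t\to 0^+} \sup_{n} |g_n(t)| = 0$. Then $\lim_{\alpha\to\infty} \sup_n \left| \alpha \int_0^\infty e^{-\alpha t} g_n(t)\,dt \right| = 0$. -/

import Mathlib

/-!
Split `|g_n|` into its size `ε` near `0` and its bound `C` beyond a point `d`. Since
`e^{-αt} ≤ e^{-αd/2} e^{-αt/2}` for `t ≥ d`, one gets the pointwise majorant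
`ε e^{-αt} + C e^{-αd/2} e^{-αt/2}`, uniformly in `n`, whence
`|α ∫₀^∞ e^{-αt} g_n(t) dt| ≤ ε + 2 C e^{-αd/2}`,
and the last term vanishes as `α → ∞`.
-/

open Filter MeasureTheory Set

theorem integral_exp_neg_mul_Ioi_zero {b : ℝ} (hb : 0 < b) :
    ∫ t in Ioi (0 : ℝ), Real.exp (-b * t) = 1 / b := by
  rw [integral_exp_mul_Ioi (neg_lt_zero.2 hb), mul_zero, Real.exp_zero, neg_div_neg_eq]

section LaplaceBound

variable {f : ℝ → ℝ} {α ε C d : ℝ}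

theorem abs_exp_neg_mul_mul_le (hα : 0 ≤ α) (hε : 0 ≤ ε)
    (hsmall : ∀ t ∈ Ioo 0 d, |f t| ≤ ε) (hbd : ∀ t, d ≤ t → |f t| ≤ C)
    {t : ℝ} (ht : 0 < t) :
    |Real.exp (-α * t) * f t|
      ≤ ε * Real.exp (-α * t) + C * Real.exp (-α * d / 2) * Real.exp (-(α / 2) * t) := by
  have hC : 0 ≤ C := (abs_nonneg _).trans (hbd d le_rfl)
  rw [abs_mul, abs_of_pos (Real.exp_pos _)]
  rcases lt_or_ge t d with htd | htd
  · have hnear : Real.exp (-α * t) * |f t| ≤ ε * Real.exp (-α * t) := by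
      rw [mul_comm]; exact mul_le_mul_of_nonneg_right (hsmall t ⟨ht, htd⟩) (Real.exp_pos _).le
    have hfar : 0 ≤ C * Real.exp (-α * d / 2) * Real.exp (-(α / 2) * t) := by positivity
    linarith
  · have hexp : Real.exp (-α * t) ≤ Real.exp (-α * d / 2) * Real.exp (-(α / 2) * t) := by
      rw [← Real.exp_add, Real.exp_le_exp]; nlinarith
    calc Real.exp (-α * t) * |f t|
        ≤ Real.exp (-α * d / 2) * Real.exp (-(α / 2) * t) * C :=
          mul_le_mul hexp (hbd t htd) (abs_nonneg _) (by positivity)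
      _ ≤ _ := by nlinarith [mul_nonneg hε (Real.exp_pos (-α * t)).le]

theorem abs_mul_integral_exp_neg_mul_le (hα : 0 < α) (hε : 0 ≤ ε)
    (hsmall : ∀ t ∈ Ioo 0 d, |f t| ≤ ε) (hbd : ∀ t, d ≤ t → |f t| ≤ C) :
    |α * ∫ t in Ioi (0 : ℝ), Real.exp (-α * t) * f t|
      ≤ ε + 2 * C * Real.exp (-α * d / 2) := by
  have hα2 : 0 < α / 2 := half_pos hα
  have hint₁ := (exp_neg_integrableOn_Ioi 0 hα).const_mul ε
  have hint₂ := (exp_neg_integrableOn_Ioi 0 hα2).const_mul (C * Real.exp (-α * d / 2))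
  have hle := norm_integral_le_of_norm_le (f := fun t => Real.exp (-α * t) * f t)
    (hint₁.add hint₂)
    (ae_restrict_of_forall_mem measurableSet_Ioi fun t ht =>
      abs_exp_neg_mul_mul_le hα.le hε hsmall hbd ht)
  rw [Real.norm_eq_abs, integral_add' hint₁ hint₂, integral_const_mul, integral_const_mul,
    integral_exp_neg_mul_Ioi_zero hα, integral_exp_neg_mul_Ioi_zero hα2] at hle
  rw [abs_mul, abs_of_pos hα]
  calc α * |∫ t in Ioi (0 : ℝ), Real.exp (-α * t) * f t|
      ≤ α * (ε * (1 / α) + C * Real.exp (-α * d / 2) * (1 / (α / 2))) :=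
        mul_le_mul_of_nonneg_left hle hα.le
    _ = ε + 2 * C * Real.exp (-α * d / 2) := by field_simp

end LaplaceBound

theorem tendsto_exp_neg_mul_div_two_atTop {d : ℝ} (hd : 0 < d) :
    Tendsto (fun α : ℝ => Real.exp (-α * d / 2)) atTop (nhds 0) := by
  refine Real.tendsto_exp_atBot.comp (tendsto_id.atTop_mul_const_of_neg (by linarith : -d / 2 < 0))
    |>.congr fun α => ?_
  simp only [Function.comp, id]; ring_nf

theorem stmt_2_general (g : ℕ → ℝ → ℝ) (C : ℝ)
    (hbd : ∀ n t, |g n t| ≤ C)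
    (hrc : Tendsto (fun t => ⨆ n, |g n t|) (nhdsWithin 0 (Ioi 0)) (nhds 0)) :
    Tendsto (fun α : ℝ => ⨆ n, |α * ∫ t in Ioi (0:ℝ), Real.exp (-α * t) * g n t|)
      atTop (nhds 0) := by
  refine tendsto_order.2 ⟨fun a ha => Eventually.of_forall fun α =>
    ha.trans_le (Real.iSup_nonneg fun n => abs_nonneg _), fun ε hε => ?_⟩
  obtain ⟨d, hd, hsup⟩ := (nhdsGT_basis (0 : ℝ)).eventually_iff.1
    (hrc.eventually (gt_mem_nhds (half_pos hε)))
  have hsmall : ∀ n, ∀ t ∈ Ioo 0 d, |g n t| ≤ ε / 2 := fun n t ht =>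
    (le_ciSup ⟨C, forall_mem_range.2 fun m => hbd m t⟩ n).trans (hsup ht).le
  have htail : ∀ᶠ α : ℝ in atTop, 2 * C * Real.exp (-α * d / 2) < ε / 2 := by
    refine ((tendsto_exp_neg_mul_div_two_atTop hd).const_mul (2 * C)).eventually
      (gt_mem_nhds ?_)
    simpa using half_pos hε
  filter_upwards [htail, eventually_gt_atTop 0] with α hα hαpos
  have hbound : ∀ n, |α * ∫ t in Ioi (0:ℝ), Real.exp (-α * t) * g n t|
      ≤ ε / 2 + 2 * C * Real.exp (-α * d / 2) := fun n =>
    abs_mul_integral_exp_neg_mul_le hαpos (half_pos hε).le (hsmall n) fun t _ => hbd n t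
  linarith [ciSup_le hbound]

theorem stmt_2 (g : ℕ → ℝ → ℝ) (C : ℝ) (hC : 0 ≤ C)
    (hbd : ∀ n t, |g n t| ≤ C)
    (hmeas : ∀ n, Measurable (g n)) (hg0 : ∀ n, g n 0 = 0)
    (hrc : Tendsto (fun t => ⨆ n, |g n t|) (nhdsWithin 0 (Ioi 0)) (nhds 0)) :
    Tendsto (fun α : ℝ => ⨆ n, |α * ∫ t in Ioi (0:ℝ), Real.exp (-α * t) * g n t|)
      atTop (nhds 0) :=
  stmt_2_general g C hbd hrc
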